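/- arXiv:1206.3612 — 5 statements merged into one kernel-verified Lean document; each statement's English description precedes it below -/
import Mathlib

section
/- With B the divergence transition matrix as defined from a channel W and strictly positive marginals P_X, P_Y = W P_X, every vector L orthogonal to v₀ = (√P_X(x))_x satisfies ‖B L‖ ≤ ‖L‖, i.e., the operator norm of B restricted to the orthogonal complement of v₀ is at most 1. -/
/-! Row by row, `(B L)(y) = (∑ₓ W(y|x) √P_X(x) L(x)) / √P_Y(y)`, and Cauchy–Schwarz with weights
`W(y|x)` bounds the square of the numerator by `(∑ₓ W(y|x) P_X(x)) · ∑ₓ W(y|x) L(x)² =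
P_Y(y) · ∑ₓ W(y|x) L(x)²`. Hence `(B L)(y)² ≤ ∑ₓ W(y|x) L(x)²`, and summing over `y` gives
`‖B L‖² ≤ ∑ₓ L(x)²` because the columns of `W` sum to one. -/

open Finset Matrix

lemma sq_sum_mul_sqrt_mul_le {ι : Type*} (s : Finset ι) {w p : ι → ℝ}
    (hw : ∀ i ∈ s, 0 ≤ w i) (hp : ∀ i ∈ s, 0 ≤ p i) (L : ι → ℝ) :
    (∑ i ∈ s, w i * √(p i) * L i) ^ 2 ≤ (∑ i ∈ s, w i * p i) * ∑ i ∈ s, w i * L i ^ 2 :=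
  sum_sq_le_sum_mul_sum_of_sq_le_mul s (fun i hi => mul_nonneg (hw i hi) (hp i hi))
    (fun i hi => mul_nonneg (hw i hi) (sq_nonneg _)) fun i hi => by
      rw [mul_pow, mul_pow, Real.sq_sqrt (hp i hi)]
      exact le_of_eq (by ring)

noncomputable def divergenceTransitionMatrix {X Y : Type*} (W : Matrix Y X ℝ) (PX : X → ℝ)
    (PY : Y → ℝ) : Matrix Y X ℝ :=
  fun y x => W y x * √(PX x) / √(PY y)

section DivergenceTransitionMatrix

variable {X Y : Type*} [Fintype X] {W : Matrix Y X ℝ} {PX : X → ℝ}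

lemma divergenceTransitionMatrix_mulVec_apply (PY : Y → ℝ) (L : X → ℝ) (y : Y) :
    (divergenceTransitionMatrix W PX PY *ᵥ L) y = (∑ x, W y x * √(PX x) * L x) / √(PY y) := by
  simp only [mulVec, dotProduct, divergenceTransitionMatrix, sum_div]
  exact sum_congr rfl fun x _ => by ring

lemma sq_divergenceTransitionMatrix_mulVec_apply_le (hW : ∀ y x, 0 ≤ W y x)
    (hPX : ∀ x, 0 ≤ PX x) (L : X → ℝ) (y : Y) :
    (divergenceTransitionMatrix W PX (W *ᵥ PX) *ᵥ L) y ^ 2 ≤ ∑ x, W y x * L x ^ 2 := by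
  have hrhs : 0 ≤ ∑ x, W y x * L x ^ 2 :=
    sum_nonneg fun x _ => mul_nonneg (hW y x) (sq_nonneg _)
  have hPY : (W *ᵥ PX) y = ∑ x, W y x * PX x := rfl
  have hPY0 : 0 ≤ (W *ᵥ PX) y := hPY ▸ sum_nonneg fun x _ => mul_nonneg (hW y x) (hPX x)
  rw [divergenceTransitionMatrix_mulVec_apply, div_pow, Real.sq_sqrt hPY0]
  rcases hPY0.eq_or_lt with h0 | hpos
  · -- `P_Y(y) = 0` makes the row vanish through `a / 0 = 0`
    simpa [← h0] using hrhs
  · rw [div_le_iff₀' hpos, hPY]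
    exact sq_sum_mul_sqrt_mul_le univ (fun x _ => hW y x) (fun x _ => hPX x) L

lemma sum_sq_divergenceTransitionMatrix_mulVec_le [Fintype Y] (hW : ∀ y x, 0 ≤ W y x)
    (hW1 : ∀ x, ∑ y, W y x = 1) (hPX : ∀ x, 0 ≤ PX x) (L : X → ℝ) :
    ∑ y, (divergenceTransitionMatrix W PX (W *ᵥ PX) *ᵥ L) y ^ 2 ≤ ∑ x, L x ^ 2 :=
  calc ∑ y, (divergenceTransitionMatrix W PX (W *ᵥ PX) *ᵥ L) y ^ 2
      ≤ ∑ y, ∑ x, W y x * L x ^ 2 :=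
        sum_le_sum fun y _ => sq_divergenceTransitionMatrix_mulVec_apply_le hW hPX L y
    _ = ∑ x, L x ^ 2 := by simp only [sum_comm (γ := Y), ← sum_mul, hW1, one_mul]

end DivergenceTransitionMatrix

theorem stmt_4_general {X Y : Type*} [Fintype X] [Fintype Y]
    (W : Matrix Y X ℝ) (PX : X → ℝ) (PY : Y → ℝ)
    (hW0 : ∀ y x, 0 ≤ W y x) (hW1 : ∀ x, ∑ y, W y x = 1)
    (hPXpos : ∀ x, 0 < PX x)
    (hPY : PY = W.mulVec PX)
    (B : Matrix Y X ℝ)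
    (hB : B = fun y x => W y x * Real.sqrt (PX x) / Real.sqrt (PY y)) :
    ∀ L : X → ℝ, (∑ x, L x * Real.sqrt (PX x)) = 0 →
      ∑ y, (B.mulVec L y) ^ 2 ≤ ∑ x, (L x) ^ 2 := by
  intro L _
  subst hB hPY
  exact sum_sq_divergenceTransitionMatrix_mulVec_le hW0 hW1 (fun x => (hPXpos x).le) L

/-- Every vector `L` orthogonal to `v₀ = √P_X` satisfies `‖B L‖ ≤ ‖L‖`, where
`B = diag(1/√P_Y) W diag(√P_X)` is the divergence transition matrix. -/
theorem stmt_4 {X Y : Type*} [Fintype X] [Fintype Y]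
    (W : Matrix Y X ℝ) (PX : X → ℝ) (PY : Y → ℝ)
    (hW0 : ∀ y x, 0 ≤ W y x) (hW1 : ∀ x, ∑ y, W y x = 1)
    (hPXpos : ∀ x, 0 < PX x) (hPXsum : ∑ x, PX x = 1)
    (hPY : PY = W.mulVec PX) (hPYpos : ∀ y, 0 < PY y)
    (B : Matrix Y X ℝ)
    (hB : B = fun y x => W y x * Real.sqrt (PX x) / Real.sqrt (PY y)) :
    ∀ L : X → ℝ, (∑ x, L x * Real.sqrt (PX x)) = 0 →
      ∑ y, (B.mulVec L y) ^ 2 ≤ ∑ x, (L x) ^ 2 :=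
  stmt_4_general W PX PY hW0 hW1 hPXpos hPY B hB
end

section
/- Let U → X → Y be a Markov chain on finite alphabets, where Y is obtained from X by channel W, P_X is strictly positive, and P_{X|U=u} = P_X + ε J_u with ∑_x J_u(x) = 0 for every u. Let σ be the second largest singular value of the divergence transition matrix B = diag(1/√P_Y)·W·diag(√P_X). Then I(U;Y) ≤ σ²·I(U;X) + o(ε²) as ε → 0. -/
/-!
Both mutual informations are averages over `u` of divergences `D(p + εj ‖ p)`, and by the
expansion `(1 + t) log (1 + t) = t + t²/2 + O(t³)` each of these equals `ε²/2 · χ²(p + j ‖ p)`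
up to `O(ε³)`. Writing `L = J_u / √P_X`, which is orthogonal to `√P_X` because `∑ J_u = 0`, one
has `χ²(P_Y + W J_u ‖ P_Y) = ‖B L‖²` and `χ²(P_X + J_u ‖ P_X) = ‖L‖²`, so the defining property
of `σ` compares the two second-order terms.
-/

open Filter Asymptotics Real Finset Matrix

theorem isBigO_log_one_add_sub_add_sq_div_two :
    (fun t : ℝ => log (1 + t) - t + t ^ 2 / 2) =O[nhds 0] (· ^ 3) := by
  refine .of_bound 2 ?_
  filter_upwards [Metric.ball_mem_nhds (0 : ℝ) one_half_pos] with t ht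
  rw [Metric.mem_ball, dist_zero_right, norm_eq_abs] at ht
  have htaylor := abs_log_sub_add_sum_range_le (x := -t) (by rw [abs_neg]; linarith) 2
  have hsum : ∑ i ∈ range 2, (-t) ^ (i + 1) / ((i : ℝ) + 1) + log (1 - -t) =
      log (1 + t) - t + t ^ 2 / 2 := by
    simp only [sum_range_succ, range_one, sum_singleton]
    norm_num
    ring
  rw [hsum, abs_neg] at htaylor
  have hden : |t| ^ 3 / (1 - |t|) ≤ 2 * |t| ^ 3 := by
    rw [div_le_iff₀ (by linarith)]
    nlinarith [pow_nonneg (abs_nonneg t) 3]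
  rw [norm_eq_abs, norm_eq_abs, abs_pow]
  exact htaylor.trans hden

theorem isBigO_one_add_mul_log_one_add_sub :
    (fun t : ℝ => (1 + t) * log (1 + t) - t - t ^ 2 / 2) =O[nhds 0] (· ^ 3) := by
  have hbdd : (fun t : ℝ => 1 + t) =O[nhds 0] (fun _ => (1 : ℝ)) :=
    (continuous_const.add continuous_id).continuousAt.isBigO_one ℝ
  have hcube : (fun t : ℝ => t ^ 3 / 2) =O[nhds 0] (· ^ 3) := by
    simpa only [div_eq_inv_mul] using isBigO_const_mul_self (2⁻¹ : ℝ) (· ^ 3) _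
  have hprod : (fun t : ℝ => (1 + t) * (log (1 + t) - t + t ^ 2 / 2)) =O[nhds 0] (· ^ 3) := by
    simpa using hbdd.mul isBigO_log_one_add_sub_add_sq_div_two
  exact (hprod.sub hcube).congr_left fun t => by ring

theorem isBigO_mul_log_div_sub (p j : ℝ) (hp : p ≠ 0) :
    (fun ε : ℝ => (p + ε * j) * log ((p + ε * j) / p) - ε * j - ε ^ 2 * (j ^ 2 / (2 * p)))
      =O[nhds 0] (· ^ 3) := by
  have hscale : Tendsto (fun ε : ℝ => ε * (j / p)) (nhds 0) (nhds 0) :=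
    (continuous_mul_const (j / p)).tendsto' 0 0 (zero_mul _)
  have hcomp := (isBigO_one_add_mul_log_one_add_sub.comp_tendsto hscale).const_mul_left p
  refine (hcomp.trans ?_).congr_left fun ε => ?_
  · simpa only [Function.comp_def, mul_pow, mul_comm _ ((j / p) ^ 3)] using
      isBigO_const_mul_self ((j / p) ^ 3) (· ^ 3 : ℝ → ℝ) _
  · simp only [Function.comp_apply]
    rw [show (p + ε * j) / p = 1 + ε * (j / p) by field_simp]
    field_simp

section Divergence

variable {ι : Type*} [Fintype ι]

/-- `klDivPerturb p j ε = D(p + εj ‖ p)` and `chiSqDiv p j = χ²(p + j ‖ p)`. -/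
noncomputable def klDivPerturb (p j : ι → ℝ) (ε : ℝ) : ℝ :=
  ∑ i, (p i + ε * j i) * log ((p i + ε * j i) / p i)

noncomputable def chiSqDiv (p j : ι → ℝ) : ℝ :=
  ∑ i, j i ^ 2 / p i

theorem klDivPerturb_sub_isBigO {p : ι → ℝ} (hp : ∀ i, p i ≠ 0) {j : ι → ℝ}
    (hj : ∑ i, j i = 0) :
    (fun ε => klDivPerturb p j ε - ε ^ 2 / 2 * chiSqDiv p j) =O[nhds 0] (· ^ 3) := by
  refine (IsBigO.fun_sum (s := univ) fun i _ =>
    isBigO_mul_log_div_sub (p i) (j i) (hp i)).congr_left fun ε => ?_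
  simp only [klDivPerturb, chiSqDiv, sum_sub_distrib, ← mul_sum, hj, mul_zero, sub_zero]
  rw [mul_sum, mul_sum]
  congr 1
  refine sum_congr rfl fun i _ => ?_
  ring

theorem sum_mul_klDivPerturb_sub_isBigO {U : Type*} [Fintype U] (PU : U → ℝ) {p : ι → ℝ}
    (hp : ∀ i, p i ≠ 0) {J : U → ι → ℝ} (hJ : ∀ u, ∑ i, J u i = 0) :
    (fun ε => ∑ u, PU u * klDivPerturb p (J u) ε - ε ^ 2 / 2 * ∑ u, PU u * chiSqDiv p (J u))
      =O[nhds 0] (· ^ 3) := by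
  refine (IsBigO.fun_sum (s := univ) fun u _ =>
    (klDivPerturb_sub_isBigO hp (hJ u)).const_mul_left (PU u)).congr_left fun ε => ?_
  simp only [mul_sub, sum_sub_distrib, mul_sum]
  congr 1
  refine sum_congr rfl fun u _ => ?_
  ring

theorem sum_mulVec_of_sum_col_eq_one {κ : Type*} [Fintype κ] {W : Matrix κ ι ℝ}
    (hW : ∀ i, ∑ k, W k i = 1) (v : ι → ℝ) : ∑ k, (W *ᵥ v) k = ∑ i, v i := by
  simp only [mulVec, dotProduct]
  rw [sum_comm]
  simp [← sum_mul, hW]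

theorem chiSqDiv_mulVec_le {κ : Type*} [Fintype κ] (W B : Matrix κ ι ℝ)
    {p : ι → ℝ} {q : κ → ℝ}
    (hp : ∀ i, 0 < p i) (hq : ∀ k, 0 ≤ q k)
    (hB : ∀ k i, B k i = W k i * √(p i) / √(q k)) {σ : ℝ}
    (hσ : ∀ L : ι → ℝ, ∑ i, L i * √(p i) = 0 → ∑ k, (B *ᵥ L) k ^ 2 ≤ σ ^ 2 * ∑ i, L i ^ 2)
    {j : ι → ℝ} (hj : ∑ i, j i = 0) :
    chiSqDiv q (W *ᵥ j) ≤ σ ^ 2 * chiSqDiv p j := by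
  have hsqrt : ∀ i, √(p i) ≠ 0 := fun i => (sqrt_pos.mpr (hp i)).ne'
  set L : ι → ℝ := fun i => j i / √(p i)
  have hL : ∑ i, L i * √(p i) = 0 := by simpa [L, div_mul_cancel₀ _ (hsqrt _)] using hj
  have hBL : ∀ k, (B *ᵥ L) k = (W *ᵥ j) k / √(q k) := by
    intro k
    simp only [mulVec, dotProduct, hB, L, sum_div]
    refine sum_congr rfl fun i _ => ?_
    field_simp [hsqrt i]
  simpa only [chiSqDiv, hBL, L, div_pow, sq_sqrt (hq _), sq_sqrt (hp _).le] using hσ L hL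

end Divergence

theorem stmt_8_general {U X Y : Type*} [Fintype U] [Fintype X] [Fintype Y]
    (W : Matrix Y X ℝ) (PX : X → ℝ) (PY : Y → ℝ)
    (hW1 : ∀ x, ∑ y, W y x = 1)
    (hPXpos : ∀ x, 0 < PX x)
    (hPY : PY = W.mulVec PX) (hPYpos : ∀ y, 0 < PY y)
    (PU : U → ℝ) (hPU0 : ∀ u, 0 ≤ PU u)
    (J : U → X → ℝ) (hJsum : ∀ u, ∑ x, J u x = 0)
    (B : Matrix Y X ℝ)
    (hB : B = fun y x => W y x * Real.sqrt (PX x) / Real.sqrt (PY y))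
    (σ : ℝ)
    -- σ bounds the gain of B on the orthogonal complement of v₀ = √P_X:
    (hsec : ∀ L : X → ℝ, (∑ x, L x * Real.sqrt (PX x)) = 0 →
      ∑ y, (B.mulVec L y) ^ 2 ≤ σ ^ 2 * ∑ x, (L x) ^ 2)
    -- I(U;X) and I(U;Y) as functions of ε:
    (IUX IUY : ℝ → ℝ)
    (hIUX : IUX = fun ε => ∑ u, PU u *
      ∑ x, (PX x + ε * J u x) * Real.log ((PX x + ε * J u x) / PX x))
    (hIUY : IUY = fun ε => ∑ u, PU u *
      ∑ y, (W.mulVec (fun x => PX x + ε * J u x) y) *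
        Real.log ((W.mulVec (fun x => PX x + ε * J u x) y) / PY y)) :
    ∃ f : ℝ → ℝ, (f =o[nhds (0 : ℝ)] fun ε => ε ^ 2) ∧
      ∀ᶠ ε in nhds (0 : ℝ), IUY ε ≤ σ ^ 2 * IUX ε + f ε := by
  have hWJ : ∀ u, ∑ y, (W *ᵥ J u) y = 0 := fun u =>
    (sum_mulVec_of_sum_col_eq_one hW1 _).trans (hJsum u)
  have hIUX' : IUX = fun ε => ∑ u, PU u * klDivPerturb PX (J u) ε := hIUX
  have hIUY' : IUY = fun ε => ∑ u, PU u * klDivPerturb PY (W *ᵥ J u) ε := by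
    subst hIUY hPY
    funext ε
    simp only [klDivPerturb, ← Pi.add_def, ← smul_eq_mul, ← Pi.smul_def, mulVec_add, mulVec_smul]
    rfl
  have hX := sum_mul_klDivPerturb_sub_isBigO PU (fun x => (hPXpos x).ne') hJsum
  have hY := sum_mul_klDivPerturb_sub_isBigO PU (fun y => (hPYpos y).ne') hWJ
  have hchi : ∑ u, PU u * chiSqDiv PY (W *ᵥ J u) ≤ σ ^ 2 * ∑ u, PU u * chiSqDiv PX (J u) := by
    rw [mul_sum]
    refine sum_le_sum fun u _ => ?_
    rw [mul_left_comm]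
    exact mul_le_mul_of_nonneg_left (chiSqDiv_mulVec_le W B hPXpos (fun y => (hPYpos y).le)
      (fun y x => by rw [hB]) hsec (hJsum u)) (hPU0 u)
  rw [hIUX', hIUY']
  refine ⟨_, (hY.sub (hX.const_mul_left (σ ^ 2))).trans_isLittleO
    (isLittleO_pow_pow (by norm_num)), .of_forall fun ε => ?_⟩
  dsimp only
  nlinarith [mul_le_mul_of_nonneg_left hchi (sq_nonneg ε)]

/-- Local strengthening of the data processing inequality: for the Markov chain
`U → X → Y` with `P_{X|U=u} = P_X + ε J_u`, if `σ` is the second largest singular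
value of the DTM `B`, then `I(U;Y) ≤ σ² I(U;X) + o(ε²)` as `ε → 0`. -/
theorem stmt_8 {U X Y : Type*} [Fintype U] [Fintype X] [Fintype Y]
    (W : Matrix Y X ℝ) (PX : X → ℝ) (PY : Y → ℝ)
    (hW0 : ∀ y x, 0 ≤ W y x) (hW1 : ∀ x, ∑ y, W y x = 1)
    (hPXpos : ∀ x, 0 < PX x) (hPXsum : ∑ x, PX x = 1)
    (hPY : PY = W.mulVec PX) (hPYpos : ∀ y, 0 < PY y)
    (PU : U → ℝ) (hPU0 : ∀ u, 0 ≤ PU u) (hPUsum : ∑ u, PU u = 1)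
    (J : U → X → ℝ) (hJsum : ∀ u, ∑ x, J u x = 0)
    (hJmarg : ∀ x, ∑ u, PU u * J u x = 0)
    (B : Matrix Y X ℝ)
    (hB : B = fun y x => W y x * Real.sqrt (PX x) / Real.sqrt (PY y))
    (σ : ℝ) (hσ0 : 0 ≤ σ)
    -- σ bounds the gain of B on the orthogonal complement of v₀ = √P_X:
    (hsec : ∀ L : X → ℝ, (∑ x, L x * Real.sqrt (PX x)) = 0 →
      ∑ y, (B.mulVec L y) ^ 2 ≤ σ ^ 2 * ∑ x, (L x) ^ 2)
    -- I(U;X) and I(U;Y) as functions of ε: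
    (IUX IUY : ℝ → ℝ)
    (hIUX : IUX = fun ε => ∑ u, PU u *
      ∑ x, (PX x + ε * J u x) * Real.log ((PX x + ε * J u x) / PX x))
    (hIUY : IUY = fun ε => ∑ u, PU u *
      ∑ y, (W.mulVec (fun x => PX x + ε * J u x) y) *
        Real.log ((W.mulVec (fun x => PX x + ε * J u x) y) / PY y)) :
    ∃ f : ℝ → ℝ, (f =o[nhds (0 : ℝ)] fun ε => ε ^ 2) ∧
      ∀ᶠ ε in nhds (0 : ℝ), IUY ε ≤ σ ^ 2 * IUX ε + f ε :=
  stmt_8_general W PX PY hW1 hPXpos hPY hPYpos PU hPU0 J hJsum B hB σ hsec IUX IUY hIUX hIUY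
end

section
/- Let U → X → Y be a Markov chain with P_{X|U=u} = P_X + ε J_u. Up to o(ε²), I(U;X) = (ε²/2)·∑_u P_U(u)·‖L_u‖² and I(U;Y) = (ε²/2)·∑_u P_U(u)·‖B L_u‖², where L_u = diag(1/√P_X) J_u and B = diag(1/√P_Y)·W·diag(√P_X). -/
/-!
Put `t = εj/p`. The second-order Taylor expansion of `log (1 + t)` gives
`(p + εj) log ((p + εj)/p) = εj + ε²j²/(2p) + O(ε³)`, so for a perturbation `j` of `p` with
`∑ j = 0` the linear terms cancel and `D(p + εj ‖ p) = (ε²/2) ∑ j²/p + O(ε³)`. Averaging over `u`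
gives the expansion of `I(U;X)`, since `∑ₓ J_u(x)²/P_X(x) = ‖L_u‖²`. On the output side
`P_{Y|U=u} = P_Y + ε W J_u`, where `W J_u` still sums to zero because `W` is column-stochastic, and
`‖B L_u‖² = ∑_y (W J_u)(y)²/P_Y(y)`.
-/

open Filter Asymptotics Topology Matrix

theorem isBigO_log_one_add_sub_taylor :
    (fun t : ℝ => Real.log (1 + t) - (t - t ^ 2 / 2)) =O[𝓝 0] fun t => t ^ 3 := by
  refine IsBigO.of_bound 2 ?_
  filter_upwards [Metric.ball_mem_nhds (0 : ℝ) (by norm_num : (0 : ℝ) < 1 / 2)] with t ht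
  rw [mem_ball_zero_iff, Real.norm_eq_abs] at ht
  have hb := Real.abs_log_sub_add_sum_range_le (x := -t) (by rw [abs_neg]; linarith) 2
  have hsum : ∑ i ∈ Finset.range 2, (-t) ^ (i + 1) / ((i : ℝ) + 1) = -(t - t ^ 2 / 2) := by
    simp only [Finset.sum_range_succ, Finset.sum_range_zero]; ring
  rw [hsum, abs_neg, sub_neg_eq_add, neg_add_eq_sub] at hb
  calc ‖Real.log (1 + t) - (t - t ^ 2 / 2)‖ ≤ |t| ^ 3 / (1 - |t|) := hb
    _ ≤ 2 * ‖t ^ 3‖ := by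
      rw [div_le_iff₀ (by linarith), norm_pow, Real.norm_eq_abs]
      nlinarith [pow_nonneg (abs_nonneg t) 3]

theorem mul_log_div_sub_quadratic_isBigO {p : ℝ} (hp : 0 < p) (j : ℝ) :
    (fun ε : ℝ => (p + ε * j) * Real.log ((p + ε * j) / p) - (ε * j + ε ^ 2 * j ^ 2 / (2 * p)))
      =O[𝓝 0] fun ε => ε ^ 3 := by
  set t : ℝ → ℝ := fun ε => ε * (j / p)
  have ht : Tendsto t (𝓝 0) (𝓝 0) := by
    simpa [t] using (continuous_mul_const (j / p)).tendsto 0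
  have ht3 : (fun ε => t ε ^ 3) =O[𝓝 0] fun ε : ℝ => ε ^ 3 :=
    (isBigO_refl (fun ε : ℝ => ε ^ 3) _).const_mul_left ((j / p) ^ 3) |>.congr_left
      fun ε => by simp only [t]; ring
  have hfactor : (fun ε => p * (1 + t ε)) =O[𝓝 0] fun _ => (1 : ℝ) :=
    ((continuous_const.mul (continuous_const.add (continuous_mul_const _))).tendsto 0).isBigO_one ℝ
  have hremainder := hfactor.mul ((isBigO_log_one_add_sub_taylor.comp_tendsto ht).trans ht3)
  -- the expression equals `p (1 + t) (log (1 + t) - (t - t²/2)) - (p/2) t³`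
  refine ((hremainder.congr_right fun ε => one_mul _).sub (ht3.const_mul_left (p / 2))).congr_left
    fun ε => ?_
  have hq : (p + ε * j) / p = 1 + t ε := by simp only [t]; field_simp
  simp only [Function.comp_apply, hq, t]
  field_simp
  ring

section RelEntropy

variable {ι : Type*} [Fintype ι]

noncomputable def relEntropy (q p : ι → ℝ) : ℝ := ∑ i, q i * Real.log (q i / p i)

theorem relEntropy_add_smul_sub_isBigO {p : ι → ℝ} (hp : ∀ i, 0 < p i) {j : ι → ℝ}
    (hj : ∑ i, j i = 0) :
    (fun ε : ℝ => relEntropy (p + ε • j) p - ε ^ 2 / 2 * ∑ i, j i ^ 2 / p i)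
      =O[𝓝 0] fun ε => ε ^ 3 := by
  refine (IsBigO.fun_sum (s := Finset.univ) fun i _ =>
    mul_log_div_sub_quadratic_isBigO (hp i) (j i)).congr_left fun ε => ?_
  simp only [relEntropy, Pi.add_apply, Pi.smul_apply, smul_eq_mul]
  rw [Finset.sum_sub_distrib, Finset.sum_add_distrib, ← Finset.mul_sum, hj, mul_zero, zero_add,
    Finset.mul_sum]
  exact congrArg _ (Finset.sum_congr rfl fun i _ => by ring)

theorem sum_mul_relEntropy_add_smul_sub_isBigO {U : Type*} [Fintype U] (w : U → ℝ)
    {p : ι → ℝ} (hp : ∀ i, 0 < p i) {j : U → ι → ℝ} (hj : ∀ u, ∑ i, j u i = 0) :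
    (fun ε : ℝ => ∑ u, w u * relEntropy (p + ε • j u) p
        - ε ^ 2 / 2 * ∑ u, w u * ∑ i, j u i ^ 2 / p i) =O[𝓝 0] fun ε => ε ^ 3 := by
  refine (IsBigO.fun_sum (s := Finset.univ) fun u _ =>
    (relEntropy_add_smul_sub_isBigO hp (hj u)).const_mul_left (w u)).congr_left fun ε => ?_
  rw [Finset.mul_sum, ← Finset.sum_sub_distrib]
  exact Finset.sum_congr rfl fun u _ => by ring

end RelEntropy

namespace Matrix

variable {m n : Type*} [Fintype n]

theorem sum_mulVec_of_sum_col_eq_one [Fintype m] {R : Type*} [NonAssocSemiring R]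
    {W : Matrix m n R} (hW : ∀ x, ∑ y, W y x = 1) (v : n → R) :
    ∑ y, (W *ᵥ v) y = ∑ x, v x := by
  simp only [mulVec, dotProduct]
  rw [Finset.sum_comm]
  simp [← Finset.sum_mul, hW]

theorem mulVec_div_sqrt_apply (W : Matrix m n ℝ) {p : n → ℝ} (hp : ∀ x, 0 < p x)
    (q : m → ℝ) (v : n → ℝ) (y : m) :
    ((fun y x => W y x * √(p x) / √(q y) : Matrix m n ℝ) *ᵥ fun x => v x / √(p x)) y
      = (W *ᵥ v) y / √(q y) := by
  simp only [mulVec, dotProduct, Finset.sum_div]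
  refine Finset.sum_congr rfl fun x _ => ?_
  have := (Real.sqrt_pos.2 (hp x)).ne'
  field_simp

end Matrix

theorem stmt_9_general {U X Y : Type*} [Fintype U] [Fintype X] [Fintype Y]
    (W : Matrix Y X ℝ) (PX : X → ℝ) (PY : Y → ℝ)
    (hW1 : ∀ x, ∑ y, W y x = 1)
    (hPXpos : ∀ x, 0 < PX x)
    (hPY : PY = W.mulVec PX) (hPYpos : ∀ y, 0 < PY y)
    (PU : U → ℝ)
    (J : U → X → ℝ) (hJsum : ∀ u, ∑ x, J u x = 0)
    (B : Matrix Y X ℝ)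
    (hB : B = fun y x => W y x * Real.sqrt (PX x) / Real.sqrt (PY y))
    (L : U → X → ℝ) (hL : ∀ u x, L u x = J u x / Real.sqrt (PX x))
    (IUX IUY : ℝ → ℝ)
    (hIUX : IUX = fun ε => ∑ u, PU u *
      ∑ x, (PX x + ε * J u x) * Real.log ((PX x + ε * J u x) / PX x))
    (hIUY : IUY = fun ε => ∑ u, PU u *
      ∑ y, (W.mulVec (fun x => PX x + ε * J u x) y) *
        Real.log ((W.mulVec (fun x => PX x + ε * J u x) y) / PY y)) :
    ((fun ε : ℝ => IUX ε - ε ^ 2 / 2 * ∑ u, PU u * ∑ x, (L u x) ^ 2)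
        =o[nhds (0 : ℝ)] fun ε => ε ^ 2) ∧
    ((fun ε : ℝ => IUY ε - ε ^ 2 / 2 * ∑ u, PU u * ∑ y, (B.mulVec (L u) y) ^ 2)
        =o[nhds (0 : ℝ)] fun ε => ε ^ 2) := by
  have hLsq : ∀ u x, L u x ^ 2 = J u x ^ 2 / PX x := fun u x => by
    rw [hL, div_pow, Real.sq_sqrt (hPXpos x).le]
  have hBLsq : ∀ u y, (B *ᵥ L u) y ^ 2 = (W *ᵥ J u) y ^ 2 / PY y := fun u y => by
    rw [hB, show L u = _ from funext (hL u), Matrix.mulVec_div_sqrt_apply W hPXpos, div_pow,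
      Real.sq_sqrt (hPYpos y).le]
  have hWpert : ∀ u (ε : ℝ), W *ᵥ (PX + ε • J u) = PY + ε • W *ᵥ J u := fun u ε => by
    rw [Matrix.mulVec_add, Matrix.mulVec_smul, hPY]
  have hWJ : ∀ u, ∑ y, (W *ᵥ J u) y = 0 := fun u => by
    rw [Matrix.sum_mulVec_of_sum_col_eq_one hW1, hJsum u]
  have hcube : (fun ε : ℝ => ε ^ 3) =o[𝓝 0] fun ε => ε ^ 2 := isLittleO_pow_pow (by norm_num)
  constructor
  · refine ((sum_mul_relEntropy_add_smul_sub_isBigO PU hPXpos hJsum).trans_isLittleO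
      hcube).congr_left fun ε => ?_
    simp only [hIUX, hLsq]
    rfl
  · refine ((sum_mul_relEntropy_add_smul_sub_isBigO PU hPYpos hWJ).trans_isLittleO
      hcube).congr_left fun ε => ?_
    simp only [hIUY, hBLsq, ← hWpert]
    rfl

/-- Local quadratic expressions of mutual information: with `P_{X|U=u} = P_X + ε J_u`,
`I(U;X) = (ε²/2) ∑_u P_U(u) ‖L_u‖² + o(ε²)` and
`I(U;Y) = (ε²/2) ∑_u P_U(u) ‖B L_u‖² + o(ε²)`,
where `L_u = diag(1/√P_X) J_u` and `B` is the divergence transition matrix. -/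
theorem stmt_9 {U X Y : Type*} [Fintype U] [Fintype X] [Fintype Y]
    (W : Matrix Y X ℝ) (PX : X → ℝ) (PY : Y → ℝ)
    (hW0 : ∀ y x, 0 ≤ W y x) (hW1 : ∀ x, ∑ y, W y x = 1)
    (hPXpos : ∀ x, 0 < PX x) (hPXsum : ∑ x, PX x = 1)
    (hPY : PY = W.mulVec PX) (hPYpos : ∀ y, 0 < PY y)
    (PU : U → ℝ) (hPU0 : ∀ u, 0 ≤ PU u) (hPUsum : ∑ u, PU u = 1)
    (J : U → X → ℝ) (hJsum : ∀ u, ∑ x, J u x = 0)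
    (hJmarg : ∀ x, ∑ u, PU u * J u x = 0)
    (B : Matrix Y X ℝ)
    (hB : B = fun y x => W y x * Real.sqrt (PX x) / Real.sqrt (PY y))
    (L : U → X → ℝ) (hL : ∀ u x, L u x = J u x / Real.sqrt (PX x))
    (IUX IUY : ℝ → ℝ)
    (hIUX : IUX = fun ε => ∑ u, PU u *
      ∑ x, (PX x + ε * J u x) * Real.log ((PX x + ε * J u x) / PX x))
    (hIUY : IUY = fun ε => ∑ u, PU u *
      ∑ y, (W.mulVec (fun x => PX x + ε * J u x) y) *
        Real.log ((W.mulVec (fun x => PX x + ε * J u x) y) / PY y)) :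
    ((fun ε : ℝ => IUX ε - ε ^ 2 / 2 * ∑ u, PU u * ∑ x, (L u x) ^ 2)
        =o[nhds (0 : ℝ)] fun ε => ε ^ 2) ∧
    ((fun ε : ℝ => IUY ε - ε ^ 2 / 2 * ∑ u, PU u * ∑ y, (B.mulVec (L u) y) ^ 2)
        =o[nhds (0 : ℝ)] fun ε => ε ^ 2) :=
  stmt_9_general W PX PY hW1 hPXpos hPY hPYpos PU J hJsum B hB L hL IUX IUY hIUX hIUY
end

section
/- For the 'windmill' channel: let B₁, B₂, B₃ be the 2×2 linear maps on ℝ² given by B_k = P∘R_{θ_k}, where R_θ is rotation by θ, θ₁ = 0, θ₂ = 2π/3, θ₃ = 4π/3, and P is orthogonal projection onto the horizontal axis. Then for every unit vector L ∈ ℝ², min{‖B₁L‖², ‖B₂L‖², ‖B₃L‖²} ≤ 1/4. -/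
/-!
Writing `L = (x, y)`, the three values `‖B_k L‖²` are `x²` and `((x ± √3 y) / 2)²`. On the unit
circle each of them minus `1/4` factors, and the product of the three differences is
`-(y (3x² - y²))² / 16 ≤ 0`, so they cannot all exceed `1/4`.
-/

open Real Matrix

theorem sum_sq_mulVec_projRot (θ : ℝ) (L : Fin 2 → ℝ) :
    ∑ i, (!![cos θ, -sin θ; 0, 0] *ᵥ L) i ^ 2 = (cos θ * L 0 - sin θ * L 1) ^ 2 := by
  simp [Fin.sum_univ_two, mulVec, dotProduct, sub_eq_add_neg]

theorem cos_two_pi_div_three : cos (2 * π / 3) = -(1 / 2) := by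
  rw [show 2 * π / 3 = π - π / 3 by ring, cos_pi_sub, cos_pi_div_three]

theorem sin_two_pi_div_three : sin (2 * π / 3) = √3 / 2 := by
  rw [show 2 * π / 3 = π - π / 3 by ring, sin_pi_sub, sin_pi_div_three]

theorem cos_four_pi_div_three : cos (4 * π / 3) = -(1 / 2) := by
  rw [show 4 * π / 3 = π / 3 + π by ring, cos_add_pi, cos_pi_div_three]

theorem sin_four_pi_div_three : sin (4 * π / 3) = -(√3 / 2) := by
  rw [show 4 * π / 3 = π / 3 + π by ring, sin_add_pi, sin_pi_div_three]

theorem min_min_le_of_mul_nonpos {α : Type*} [CommRing α] [LinearOrder α] [IsStrictOrderedRing α]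
    {a b c t : α} (h : (a - t) * (b - t) * (c - t) ≤ 0) :
    min (min a b) c ≤ t := by
  by_contra! hlt
  obtain ⟨⟨ha, hb⟩, hc⟩ : (t < a ∧ t < b) ∧ t < c := by simpa only [lt_min_iff] using hlt
  exact h.not_gt (mul_pos (mul_pos (sub_pos.2 ha) (sub_pos.2 hb)) (sub_pos.2 hc))

theorem min_sq_windmill_le_quarter {x y : ℝ} (h : x ^ 2 + y ^ 2 = 1) :
    min (min (x ^ 2) ((-(1 / 2) * x - √3 / 2 * y) ^ 2)) ((-(1 / 2) * x + √3 / 2 * y) ^ 2)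
      ≤ 1 / 4 := by
  have h3 : √3 ^ 2 = 3 := sq_sqrt (by norm_num)
  apply min_min_le_of_mul_nonpos
  have ha : x ^ 2 - 1 / 4 = (3 * x ^ 2 - y ^ 2) / 4 := by linear_combination h / 4
  have hb : (-(1 / 2) * x - √3 / 2 * y) ^ 2 - 1 / 4 = y * (y + √3 * x) / 2 := by
    linear_combination (y ^ 2 / 4) * h3 + h / 4
  have hc : (-(1 / 2) * x + √3 / 2 * y) ^ 2 - 1 / 4 = y * (y - √3 * x) / 2 := by
    linear_combination (y ^ 2 / 4) * h3 + h / 4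
  have hprod : (3 * x ^ 2 - y ^ 2) / 4 * (y * (y + √3 * x) / 2) * (y * (y - √3 * x) / 2)
      = -(y * (3 * x ^ 2 - y ^ 2)) ^ 2 / 16 := by
    linear_combination (-(x ^ 2 * y ^ 2 * (3 * x ^ 2 - y ^ 2)) / 16) * h3
  rw [ha, hb, hc, hprod]
  have := sq_nonneg (y * (3 * x ^ 2 - y ^ 2))
  linarith

/-- Windmill channel, single-letter bound: with `B_k` the projection onto the
horizontal axis composed with rotation by `2π(k−1)/3`, every unit vector `L`
satisfies `min_k ‖B_k L‖² ≤ 1/4`. -/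
theorem stmt_12
    (B : Fin 3 → Matrix (Fin 2) (Fin 2) ℝ)
    (hB : ∀ k : Fin 3, B k =
      !![Real.cos (2 * π * (k : ℕ) / 3), -Real.sin (2 * π * (k : ℕ) / 3); 0, 0]) :
    ∀ L : Fin 2 → ℝ, (L 0) ^ 2 + (L 1) ^ 2 = 1 →
      min (min (∑ i, ((B 0).mulVec L i) ^ 2) (∑ i, ((B 1).mulVec L i) ^ 2))
          (∑ i, ((B 2).mulVec L i) ^ 2) ≤ 1 / 4 := by
  intro L hL
  have hθ₀ : 2 * π * ((0 : Fin 3) : ℕ) / 3 = 0 := by simp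
  have hθ₁ : 2 * π * ((1 : Fin 3) : ℕ) / 3 = 2 * π / 3 := by norm_num
  have hθ₂ : 2 * π * ((2 : Fin 3) : ℕ) / 3 = 4 * π / 3 := by norm_num; ring
  rw [hB 0, hB 1, hB 2, sum_sq_mulVec_projRot, sum_sq_mulVec_projRot, sum_sq_mulVec_projRot,
    hθ₀, hθ₁, hθ₂, cos_zero, sin_zero, cos_two_pi_div_three, sin_two_pi_div_three,
    cos_four_pi_div_three, sin_four_pi_div_three]
  convert min_sq_windmill_le_quarter hL using 3 <;> ring
end

section
/- Let B_k = P∘R_{2π(k−1)/3}, k = 1,2,3, be the windmill maps. Take U uniform on {0,...,5} and L_{2j} = −L_{2j+1} = φ_{θ + 2πj/3} for j = 0,1,2. Then ∑_u P_U(u)‖L_u‖² = 1 and ∑_u P_U(u)‖B_k L_u‖² = 1/2 for each k = 1,2,3; i.e., with |U| = 6 the single-letter value 1/2 is achievable, exceeding the max-min bound 1/4 for any single perturbation direction. -/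
/-!
The windmill map `B_k = P ∘ R_{2πk/3}` sends the unit vector `φ_ψ` to `(cos (ψ + 2πk/3), 0)`, so
`‖B_k L_u‖² = cos² (θ + 2πk/3 + 2πj/3)` with `j = ⌊u/2⌋`. For any `x`, the three values
`cos² (x + 2πj/3)`, `j = 0, 1, 2`, sum to `3/2`, independently of `x`; each `j` occurs twice, giving
the mean `1/2`. The perturbations come in opposite pairs `L_{2j} = -L_{2j+1}`, so their mean is `0`.
-/

open Real Finset
open scoped Matrix

theorem Finset.sum_range_two_mul_eq_sum_pairs {M : Type*} [AddCommMonoid M] (f : ℕ → M)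
    (n : ℕ) : ∑ u ∈ range (2 * n), f u = ∑ j ∈ range n, (f (2 * j) + f (2 * j + 1)) := by
  induction n with
  | zero => simp
  | succ n ih =>
    rw [show 2 * (n + 1) = 2 * n + 1 + 1 by ring, sum_range_succ, sum_range_succ, ih,
      sum_range_succ, add_assoc]

theorem sum_cos_sq_add_two_pi_mul_div_three (x : ℝ) :
    ∑ j ∈ range 3, cos (x + 2 * π * j / 3) ^ 2 = 3 / 2 := by
  have hc : cos (2 * π / 3) = -(1 / 2) := by
    rw [show 2 * π / 3 = π - π / 3 by ring, cos_pi_sub, cos_pi_div_three]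
  have hs : sin (2 * π / 3) = √3 / 2 := by
    rw [show 2 * π / 3 = π - π / 3 by ring, sin_pi_sub, sin_pi_div_three]
  have hc2 : cos (2 * π * 2 / 3) = -(1 / 2) := by
    rw [show 2 * π * 2 / 3 = π / 3 + π by ring, cos_add_pi, cos_pi_div_three]
  have hs2 : sin (2 * π * 2 / 3) = -(√3 / 2) := by
    rw [show 2 * π * 2 / 3 = π / 3 + π by ring, sin_add_pi, sin_pi_div_three]
  simp only [sum_range_succ, sum_range_zero, Nat.cast_zero, Nat.cast_one, Nat.cast_ofNat,
    mul_zero, zero_div, mul_one, cos_add, cos_zero, sin_zero, hc, hs, hc2, hs2]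
  linear_combination (sin x ^ 2 / 2) * sq_sqrt (show (0 : ℝ) ≤ 3 by norm_num) +
    (3 / 2) * sin_sq_add_cos_sq x

theorem sum_sq_smul {n : Type*} [Fintype n] (c : ℝ) (v : n → ℝ) :
    ∑ i, ((c • v) i) ^ 2 = c ^ 2 * ∑ i, v i ^ 2 := by
  simp [mul_pow, mul_sum]

theorem sum_sq_cos_sin (ψ : ℝ) : ∑ i, (![cos ψ, sin ψ] i) ^ 2 = 1 := by
  simp

theorem projRotation_mulVec_cos_sin (a ψ : ℝ) :
    !![cos a, -sin a; 0, 0] *ᵥ ![cos ψ, sin ψ] = ![cos (ψ + a), 0] := by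
  ext i
  fin_cases i
  · simp [Matrix.mulVec, dotProduct, cos_add]
    ring
  · simp [Matrix.mulVec, dotProduct]

/-- Windmill channel with `|U| = 6`: taking `U` uniform on `{0,…,5}` and
`L_{2j} = −L_{2j+1} = φ_{θ+2πj/3}`, the perturbations satisfy
`∑_u P_U(u) ‖L_u‖² = 1` and `∑_u P_U(u) ‖B_k L_u‖² = 1/2` for each `k`,
so the value `1/2` is achievable with single letters and cardinality 6,
exceeding the bound `1/4` for any single perturbation direction. -/
theorem stmt_16
    (B : Fin 3 → Matrix (Fin 2) (Fin 2) ℝ)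
    (hB : ∀ k : Fin 3, B k =
      !![Real.cos (2 * π * (k : ℕ) / 3), -Real.sin (2 * π * (k : ℕ) / 3); 0, 0])
    (φ : ℝ → (Fin 2 → ℝ)) (hφ : ∀ ψ, φ ψ = ![Real.cos ψ, Real.sin ψ])
    (θ : ℝ) (PU : Fin 6 → ℝ) (hPU : ∀ u, PU u = 1 / 6)
    (L : Fin 6 → (Fin 2 → ℝ))
    (hL : ∀ u : Fin 6, L u =
      ((-1 : ℝ) ^ (u : ℕ)) • φ (θ + 2 * π * ((u : ℕ) / 2 : ℕ) / 3)) :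
    (∑ u, PU u * ∑ i, (L u i) ^ 2 = 1) ∧
    (∀ k : Fin 3, ∑ u, PU u * ∑ i, ((B k).mulVec (L u) i) ^ 2 = 1 / 2) ∧
    (∑ u, PU u • L u = 0) := by
  have hsign (n : ℕ) : ((-1 : ℝ) ^ n) ^ 2 = 1 := by
    rw [← pow_mul, mul_comm, pow_mul, neg_one_sq, one_pow]
  have hpair (n : ℕ) : (2 * n) / 2 = n ∧ (2 * n + 1) / 2 = n := by omega
  refine ⟨?_, fun k => ?_, ?_⟩
  · have hunit (u : Fin 6) : ∑ i, (L u i) ^ 2 = 1 := by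
      rw [hL, hφ, sum_sq_smul, sum_sq_cos_sin, hsign, one_mul]
    simp only [hPU, hunit]
    norm_num
  · have hnorm (u : Fin 6) : ∑ i, ((B k).mulVec (L u) i) ^ 2 =
        cos (θ + 2 * π * (k : ℕ) / 3 + 2 * π * ((u : ℕ) / 2 : ℕ) / 3) ^ 2 := by
      rw [hL, hφ, hB, Matrix.mulVec_smul, projRotation_mulVec_cos_sin, sum_sq_smul, hsign,
        add_right_comm]
      simp
    simp only [hPU, hnorm, ← mul_sum]
    rw [Fin.sum_univ_eq_sum_range
        (fun u => cos (θ + 2 * π * (k : ℕ) / 3 + 2 * π * (u / 2 : ℕ) / 3) ^ 2) 6,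
      show 6 = 2 * 3 from rfl, sum_range_two_mul_eq_sum_pairs]
    simp only [hpair, ← two_mul, ← mul_sum, sum_cos_sq_add_two_pi_mul_div_three]
    norm_num
  · simp only [hPU, hL, ← smul_sum]
    rw [Fin.sum_univ_eq_sum_range (fun u => (-1 : ℝ) ^ u • φ (θ + 2 * π * (u / 2 : ℕ) / 3)) 6,
      show 6 = 2 * 3 from rfl, sum_range_two_mul_eq_sum_pairs]
    simp [hpair, pow_succ, pow_mul]
end
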